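/- Under the stated Bourgain–Delbaen assumptions, if ((d_γ)_{γ∈Γ}, (P_q)_{q≥0}) is an admissible pair of families, then for every x ∈ ℓ¹(Γ) one has P_q x → x as q → ∞; in particular the closed linear span of {d_γ : γ ∈ Γ} is all of ℓ¹(Γ). -/

import Mathlib

noncomputable section

/-- `ℓ¹(Γ)`. -/
abbrev ellOne (Γ : Type*) : Type _ := lp (fun _ : Γ => ℝ) 1

/-- The coordinate vector `e_γ` in `ℓ¹(Γ)`. -/
noncomputable def eVec {Γ : Type*} (γ : Γ) : ellOne Γ :=
  letI := Classical.decEq Γ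
  lp.single 1 γ (1 : ℝ)

/-- The datum `τ(γ)` attached to an element `γ` in a Bourgain–Delbaen construction:
Type 0, Type 1 or Type 2. -/
inductive BDDatum (Γ : Type*) where
  | type0 (α : ℝ) (ξ : Γ)
  | type1 (p : ℕ) (β : ℝ) (b : ellOne Γ)
  | type2 (α : ℝ) (ξ : Γ) (p : ℕ) (β : ℝ) (b : ellOne Γ)

/-- The data of a Bourgain–Delbaen construction: pairwise disjoint nonempty finite
sets `Δ_q` (`q ≥ 1`) covering `Γ`, a constant `0 < θ < 1/2`, and an assignment `τ`
of a datum of Type 0, 1 or 2 to each `γ ∈ Δ_{q+1}`, `q ≥ 1`.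
Here `⋃ p ∈ Set.Icc 1 q, Δ p` plays the role of `Γ_q` (empty for `q = 0`). -/
structure BDData (Γ : Type*) where
  Δ : ℕ → Set Γ
  Δ_finite : ∀ q, 1 ≤ q → (Δ q).Finite
  Δ_nonempty : ∀ q, 1 ≤ q → (Δ q).Nonempty
  Δ_disjoint : ∀ p q, 1 ≤ p → 1 ≤ q → p ≠ q → Disjoint (Δ p) (Δ q)
  Δ_cover : ⋃ q ∈ {q : ℕ | 1 ≤ q}, Δ q = Set.univ
  θ : ℝ
  θ_pos : 0 < θ
  θ_lt_half : θ < 1 / 2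
  τ : Γ → BDDatum Γ
  τ_spec : ∀ q, 1 ≤ q → ∀ γ ∈ Δ (q + 1),
    match τ γ with
    | .type0 α ξ => 0 ≤ α ∧ α ≤ 1 ∧ ξ ∈ ⋃ r ∈ Set.Icc 1 q, Δ r
    | .type1 p β b => p < q ∧ 0 < β ∧ β ≤ θ ∧ ‖b‖ ≤ 1 ∧
        ∀ γ' : Γ, γ' ∉ (⋃ r ∈ Set.Icc 1 q, Δ r) \ (⋃ r ∈ Set.Icc 1 p, Δ r) → b γ' = 0
    | .type2 α ξ p β b => 0 < α ∧ α ≤ 1 ∧ 1 ≤ p ∧ p < q ∧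
        ξ ∈ (⋃ r ∈ Set.Icc 1 p, Δ r) ∧ 0 < β ∧ β ≤ θ ∧ ‖b‖ ≤ 1 ∧
        ∀ γ' : Γ, γ' ∉ (⋃ r ∈ Set.Icc 1 q, Δ r) \ (⋃ r ∈ Set.Icc 1 p, Δ r) → b γ' = 0

/-- A pair of families `(d_γ)_{γ ∈ Γ}`, `(P_q)_{q ≥ 0}` is admissible if `P_0 = 0` and
properties (A) and (B) of the Bourgain–Delbaen construction hold. -/
def Admissible {Γ : Type*} (D : BDData Γ) (d : Γ → ellOne Γ)
    (P : ℕ → ellOne Γ →L[ℝ] ellOne Γ) : Prop :=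
  P 0 = 0 ∧
  (∀ q, 1 ≤ q → ∀ γ : Γ,
    (γ ∈ ⋃ r ∈ Set.Icc 1 q, D.Δ r → P q (d γ) = d γ) ∧
    (γ ∉ ⋃ r ∈ Set.Icc 1 q, D.Δ r → P q (d γ) = 0)) ∧
  (∀ γ ∈ D.Δ 1, eVec γ - d γ = 0) ∧
  (∀ q, 1 ≤ q → ∀ γ ∈ D.Δ (q + 1),
    eVec γ - d γ =
      match D.τ γ with
      | .type0 α ξ => α • eVec ξ
      | .type1 p β b => β • ((b : ellOne Γ) - P p b)
      | .type2 α ξ p β b => α • eVec ξ + β • ((b : ellOne Γ) - P p b))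

/-!
Put `C = (1 - 2θ)⁻¹`, so that `1 + 2θC = C`. By (A), on the span of the `d_γ` the projections
compose as `P_a P_b = P_{min a b}`, and `P_r` fixes the span of `{d_γ : γ ∈ Γ_q}` for `r ≥ q`.
Induction on the level shows that for `γ ∈ Γ_q` the vector `e_γ = d_γ + c_γ` lies in that span
and that `‖P_r e_γ‖ ≤ C` for all `r`: for `r ≤ q` one has `P_r e_γ = P_r c_γ`, and (B) bounds this
by `1 + 2θC`, the induction hypothesis controlling `P_r b` since `b` is supported in `Γ_q`.
On `ℓ¹` an operator norm is the supremum over the unit vectors, so `‖P_r‖ ≤ C` for all `r`.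
The span of the `d_γ` contains every `e_γ`, hence is dense, and `P_q x = x` eventually on it;
equicontinuity of `(P_q)` extends the convergence to all of `ℓ¹(Γ)`.
-/

namespace ellOne

variable {Γ : Type*}

theorem norm_eq_tsum (y : ellOne Γ) : ‖y‖ = ∑' γ, ‖y γ‖ := by
  simpa using lp.norm_rpow_eq_tsum (p := 1) (E := fun _ : Γ => ℝ) (by norm_num) y

theorem summable_norm (y : ellOne Γ) : Summable fun γ => ‖y γ‖ := by
  simpa using (lp.memℓp y).summable (p := 1) (by norm_num)

theorem norm_eVec (γ : Γ) : ‖eVec γ‖ = 1 := by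
  let := Classical.decEq Γ
  simp [eVec, lp.norm_single (p := 1) (E := fun _ : Γ => ℝ) one_pos]

theorem hasSum_smul_eVec (y : ellOne Γ) : HasSum (fun γ => y γ • eVec γ) y := by
  let := Classical.decEq Γ
  convert lp.hasSum_single (p := 1) (by simp) y using 2 with γ
  simpa [eVec] using (lp.single_smul (𝕜 := ℝ) (E := fun _ : Γ => ℝ) 1 γ (y γ) (1 : ℝ)).symm

theorem mem_of_forall_eVec_mem {M : Submodule ℝ (ellOne Γ)} {y : ellOne Γ} {s : Set Γ}
    (hs : s.Finite) (hy : ∀ γ ∉ s, y γ = 0) (hM : ∀ γ ∈ s, eVec γ ∈ M) : y ∈ M := by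
  have hsum : HasSum (fun γ => y γ • eVec γ) (∑ γ ∈ hs.toFinset, y γ • eVec γ) :=
    hasSum_sum_of_ne_finset_zero fun γ hγ => by
      rw [hy γ (by simpa using hγ), zero_smul]
  rw [(hasSum_smul_eVec y).unique hsum]
  exact M.sum_mem fun γ hγ => M.smul_mem _ (hM γ (by simpa using hγ))

theorem topologicalClosure_eq_top_of_forall_eVec_mem {M : Submodule ℝ (ellOne Γ)}
    (hM : ∀ γ, eVec γ ∈ M) : M.topologicalClosure = ⊤ := by
  refine Submodule.eq_top_iff'.2 fun y => ?_
  rw [← SetLike.mem_coe, Submodule.topologicalClosure_coe]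
  exact mem_closure_of_tendsto (hasSum_smul_eVec y)
    (Filter.Eventually.of_forall fun s => M.sum_mem fun γ _ => M.smul_mem _ (hM γ))

theorem norm_apply_le_of_norm_apply_eVec_le {E : Type*} [NormedAddCommGroup E]
    [NormedSpace ℝ E] (T : ellOne Γ →L[ℝ] E) {y : ellOne Γ} {s : Set Γ} {C : ℝ}
    (hy : ∀ γ ∉ s, y γ = 0) (hT : ∀ γ ∈ s, ‖T (eVec γ)‖ ≤ C) : ‖T y‖ ≤ C * ‖y‖ := by
  have hTy : HasSum (fun γ => y γ • T (eVec γ)) (T y) := by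
    simpa only [map_smul] using T.hasSum (hasSum_smul_eVec y)
  have hbound : HasSum (fun γ => ‖y γ‖ * C) (‖y‖ * C) := by
    rw [norm_eq_tsum]
    exact (summable_norm y).hasSum.mul_right C
  rw [mul_comm]
  refine hTy.norm_le_of_bounded hbound fun γ => ?_
  rw [norm_smul]
  by_cases hγ : γ ∈ s
  · exact mul_le_mul_of_nonneg_left (hT γ hγ) (norm_nonneg _)
  · simp [hy γ hγ]

end ellOne

namespace BDData

variable {Γ : Type*} (D : BDData Γ)

/-- `Γ_q`; empty for `q = 0`. -/
def upTo (q : ℕ) : Set Γ := ⋃ r ∈ Set.Icc 1 q, D.Δ r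

variable {D}

theorem mem_upTo {q : ℕ} {γ : Γ} : γ ∈ D.upTo q ↔ ∃ r, (1 ≤ r ∧ r ≤ q) ∧ γ ∈ D.Δ r := by
  simp [upTo]

theorem upTo_mono : Monotone D.upTo := fun _ _ hpq _ hγ =>
  let ⟨r, hr, hγr⟩ := mem_upTo.1 hγ
  mem_upTo.2 ⟨r, ⟨hr.1, hr.2.trans hpq⟩, hγr⟩

theorem upTo_min (a b : ℕ) : D.upTo (min a b) = D.upTo a ∩ D.upTo b := by
  rcases le_total a b with hab | hab
  · rw [min_eq_left hab, Set.inter_eq_left.2 (upTo_mono hab)]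
  · rw [min_eq_right hab, Set.inter_eq_right.2 (upTo_mono hab)]

theorem upTo_finite (q : ℕ) : (D.upTo q).Finite :=
  (Set.finite_Icc 1 q).biUnion fun r hr => D.Δ_finite r hr.1

theorem one_le_of_mem_upTo {q : ℕ} {γ : Γ} (hγ : γ ∈ D.upTo q) : 1 ≤ q := by
  obtain ⟨r, hr, -⟩ := mem_upTo.1 hγ
  omega

theorem mem_upTo_of_mem_Δ {q : ℕ} {γ : Γ} (hq : 1 ≤ q) (hγ : γ ∈ D.Δ q) : γ ∈ D.upTo q :=
  mem_upTo.2 ⟨q, ⟨hq, le_rfl⟩, hγ⟩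

theorem notMem_upTo_of_mem_Δ {n r : ℕ} {γ : Γ} (hγ : γ ∈ D.Δ n) (hr : r < n) :
    γ ∉ D.upTo r := fun hγr => by
  obtain ⟨s, hs, hγs⟩ := mem_upTo.1 hγr
  exact Set.disjoint_left.1 (D.Δ_disjoint s n hs.1 (by omega) (by omega)) hγs hγ

theorem exists_mem_upTo (γ : Γ) : ∃ q, γ ∈ D.upTo q := by
  obtain ⟨q, hq, hγ⟩ := Set.mem_iUnion₂.1 (D.Δ_cover ▸ Set.mem_univ γ)
  exact ⟨q, mem_upTo_of_mem_Δ hq hγ⟩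

theorem upTo_induction {R : ℕ → Γ → Prop} (mono : ∀ q γ, R q γ → R (q + 1) γ)
    (step : ∀ q, (∀ γ ∈ D.upTo q, R q γ) → ∀ γ ∈ D.Δ (q + 1), R (q + 1) γ) :
    ∀ q, ∀ γ ∈ D.upTo q, R q γ := by
  intro q
  induction q with
  | zero => exact fun γ hγ => absurd (one_le_of_mem_upTo hγ) (by omega)
  | succ q ih =>
    intro γ hγ
    obtain ⟨r, hr, hγr⟩ := mem_upTo.1 hγ
    rcases hr.2.lt_or_eq with hrq | rfl
    · exact mono q γ (ih γ (mem_upTo.2 ⟨r, ⟨hr.1, by omega⟩, hγr⟩))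
    · exact step q ih γ hγr

variable (D)

/-- The least `C` with `1 + 2θC ≤ C`: the norm bound that survives the induction over the
levels in `norm_apply_sub_d_le`. -/
def bound : ℝ := (1 - 2 * D.θ)⁻¹

theorem one_add_two_mul_θ_mul_bound : 1 + 2 * D.θ * D.bound = D.bound := by
  have : 1 - 2 * D.θ ≠ 0 := by linarith [D.θ_lt_half]
  rw [bound]
  field_simp
  ring

theorem one_le_bound : 1 ≤ D.bound :=
  one_le_inv₀ (by linarith [D.θ_lt_half]) |>.2 (by linarith [D.θ_pos])

def spanUpTo (d : Γ → ellOne Γ) (q : ℕ) : Submodule ℝ (ellOne Γ) :=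
  Submodule.span ℝ (d '' D.upTo q)

theorem spanUpTo_mono (d : Γ → ellOne Γ) : Monotone (spanUpTo D d) :=
  fun _ _ hpq => Submodule.span_mono (Set.image_mono (D.upTo_mono hpq))

theorem spanUpTo_le_span_range (d : Γ → ellOne Γ) (q : ℕ) :
    spanUpTo D d q ≤ Submodule.span ℝ (Set.range d) :=
  Submodule.span_mono (Set.image_subset_range d _)

end BDData

namespace Admissible

open Filter Topology BDData

variable {Γ : Type*} {D : BDData Γ} {d : Γ → ellOne Γ} {P : ℕ → ellOne Γ →L[ℝ] ellOne Γ}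

theorem apply_d_of_mem (h : Admissible D d P) {n : ℕ} {γ : Γ} (hγ : γ ∈ D.upTo n) :
    P n (d γ) = d γ :=
  (h.2.1 n (one_le_of_mem_upTo hγ) γ).1 hγ

theorem apply_d_of_notMem (h : Admissible D d P) {n : ℕ} {γ : Γ} (hγ : γ ∉ D.upTo n) :
    P n (d γ) = 0 := by
  rcases Nat.eq_zero_or_pos n with rfl | hn
  · simp [h.1]
  · exact (h.2.1 n hn γ).2 hγ

theorem apply_of_mem_spanUpTo (h : Admissible D d P) {q r : ℕ} (hqr : q ≤ r) {x : ellOne Γ}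
    (hx : x ∈ spanUpTo D d q) : P r x = x := by
  induction hx using Submodule.span_induction with
  | mem y hy =>
    obtain ⟨γ, hγ, rfl⟩ := hy
    exact h.apply_d_of_mem (upTo_mono hqr hγ)
  | zero => simp
  | add x y _ _ hx hy => simp [hx, hy]
  | smul c x _ hx => simp [hx]

theorem apply_mem_spanUpTo (h : Admissible D d P) (p : ℕ) {q : ℕ} {x : ellOne Γ}
    (hx : x ∈ spanUpTo D d q) : P p x ∈ spanUpTo D d q := by
  induction hx using Submodule.span_induction with
  | mem y hy =>
    obtain ⟨γ, hγ, rfl⟩ := hy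
    by_cases hγp : γ ∈ D.upTo p
    · rw [h.apply_d_of_mem hγp]
      exact Submodule.subset_span ⟨γ, hγ, rfl⟩
    · rw [h.apply_d_of_notMem hγp]
      exact zero_mem _
  | zero => simp
  | add x y _ _ hx hy => rw [map_add]; exact add_mem hx hy
  | smul c x _ hx => rw [map_smul]; exact Submodule.smul_mem _ _ hx

theorem apply_apply (h : Admissible D d P) (a b : ℕ) {x : ellOne Γ}
    (hx : x ∈ Submodule.span ℝ (Set.range d)) : P a (P b x) = P (min a b) x := by
  induction hx using Submodule.span_induction with
  | mem y hy =>
    obtain ⟨γ, rfl⟩ := hy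
    by_cases hb : γ ∈ D.upTo b
    · by_cases ha : γ ∈ D.upTo a
      · rw [h.apply_d_of_mem hb, h.apply_d_of_mem ha, h.apply_d_of_mem (upTo_min a b ▸ ⟨ha, hb⟩)]
      · rw [h.apply_d_of_mem hb, h.apply_d_of_notMem ha,
          h.apply_d_of_notMem fun hm => ha (upTo_mono (min_le_left a b) hm)]
    · rw [h.apply_d_of_notMem hb, map_zero,
        h.apply_d_of_notMem fun hm => hb (upTo_mono (min_le_right a b) hm)]
  | zero => simp
  | add x y _ _ hx hy => simp only [map_add, hx, hy]
  | smul c x _ hx => simp only [map_smul, hx]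

theorem eventually_apply_eq (h : Admissible D d P) {x : ellOne Γ}
    (hx : x ∈ Submodule.span ℝ (Set.range d)) : ∀ᶠ q in atTop, P q x = x := by
  induction hx using Submodule.span_induction with
  | mem y hy =>
    obtain ⟨γ, rfl⟩ := hy
    obtain ⟨q, hγ⟩ := D.exists_mem_upTo γ
    exact eventually_atTop.2 ⟨q, fun r hr => h.apply_d_of_mem (upTo_mono hr hγ)⟩
  | zero => simp
  | add x y _ _ hx hy => filter_upwards [hx, hy] with q hxq hyq; simp [hxq, hyq]
  | smul c x _ hx => filter_upwards [hx] with q hxq; simp [hxq]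

theorem sub_d_mem_spanUpTo (h : Admissible D d P) {q : ℕ} {γ : Γ} (hγ : γ ∈ D.Δ (q + 1))
    (ih : ∀ γ' ∈ D.upTo q, eVec γ' ∈ spanUpTo D d q) : eVec γ - d γ ∈ spanUpTo D d q := by
  rcases Nat.eq_zero_or_pos q with rfl | hq
  · rw [h.2.2.1 γ hγ]
    exact zero_mem _
  have hb : ∀ {p : ℕ} {b : ellOne Γ}, (∀ γ', γ' ∉ D.upTo q \ D.upTo p → b γ' = 0) →
      b - P p b ∈ spanUpTo D d q := fun hsupp =>
    have hbq := ellOne.mem_of_forall_eVec_mem (D.upTo_finite q)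
      (fun γ' hγ' => hsupp γ' fun hm => hγ' hm.1) ih
    sub_mem hbq (h.apply_mem_spanUpTo _ hbq)
  have hspec := D.τ_spec q hq γ hγ
  have hc := h.2.2.2 q hq γ hγ
  rcases hτ : D.τ γ with ⟨α, ξ⟩ | ⟨p, β, b⟩ | ⟨α, ξ, p, β, b⟩ <;> rw [hτ] at hspec hc <;> rw [hc]
  · obtain ⟨-, -, hξ⟩ := hspec
    exact Submodule.smul_mem _ _ (ih ξ hξ)
  · obtain ⟨-, -, -, -, hsupp⟩ := hspec
    exact Submodule.smul_mem _ _ (hb hsupp)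
  · obtain ⟨-, -, -, hpq, hξ, -, -, -, hsupp⟩ := hspec
    exact add_mem (Submodule.smul_mem _ _ (ih ξ (upTo_mono hpq.le hξ)))
      (Submodule.smul_mem _ _ (hb hsupp))

theorem eVec_mem_spanUpTo (h : Admissible D d P) {q : ℕ} {γ : Γ} (hγ : γ ∈ D.upTo q) :
    eVec γ ∈ spanUpTo D d q := by
  refine D.upTo_induction (R := fun q γ => eVec γ ∈ spanUpTo D d q)
    (fun q γ hγ => spanUpTo_mono D d q.le_succ hγ) (fun q ih γ hγ => ?_) q γ hγ
  have hd : d γ ∈ spanUpTo D d (q + 1) :=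
    Submodule.subset_span ⟨γ, mem_upTo_of_mem_Δ q.succ_pos hγ, rfl⟩
  rw [← add_sub_cancel (d γ) (eVec γ)]
  exact add_mem hd (spanUpTo_mono D d q.le_succ (h.sub_d_mem_spanUpTo hγ ih))

theorem mem_span_range_of_support (h : Admissible D d P) {q : ℕ} {b : ellOne Γ}
    (hb : ∀ γ ∉ D.upTo q, b γ = 0) : b ∈ Submodule.span ℝ (Set.range d) :=
  spanUpTo_le_span_range D d q <| ellOne.mem_of_forall_eVec_mem (D.upTo_finite q) hb
    fun _ hγ => h.eVec_mem_spanUpTo hγ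

theorem norm_apply_le_bound_of_support {q : ℕ}
    (ih : ∀ γ ∈ D.upTo q, ∀ s, ‖P s (eVec γ)‖ ≤ D.bound) {b : ellOne Γ} (hb1 : ‖b‖ ≤ 1)
    (hb : ∀ γ ∉ D.upTo q, b γ = 0) (s : ℕ) : ‖P s b‖ ≤ D.bound :=
  calc ‖P s b‖ ≤ D.bound * ‖b‖ :=
        ellOne.norm_apply_le_of_norm_apply_eVec_le (P s) hb fun γ hγ => ih γ hγ s
    _ ≤ D.bound := mul_le_of_le_one_right (by linarith [D.one_le_bound]) hb1

theorem apply_sub_apply_of_le (h : Admissible D d P) {r p : ℕ} (hrp : r ≤ p) {b : ellOne Γ}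
    (hb : b ∈ Submodule.span ℝ (Set.range d)) : P r (b - P p b) = 0 := by
  rw [map_sub, h.apply_apply r p hb, min_eq_left hrp, sub_self]

theorem norm_smul_apply_sub_apply_le (h : Admissible D d P) {b : ellOne Γ}
    (hb : b ∈ Submodule.span ℝ (Set.range d)) (hbP : ∀ s, ‖P s b‖ ≤ D.bound) {β : ℝ}
    (hβ : 0 < β) (hβθ : β ≤ D.θ) (r p : ℕ) :
    ‖β • P r (b - P p b)‖ ≤ 2 * D.θ * D.bound := by
  have hdiff : ‖P r (b - P p b)‖ ≤ 2 * D.bound := by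
    rw [map_sub, h.apply_apply r p hb, two_mul]
    exact (norm_sub_le _ _).trans (add_le_add (hbP r) (hbP (min r p)))
  calc ‖β • P r (b - P p b)‖ = β * ‖P r (b - P p b)‖ := by
        rw [norm_smul, Real.norm_of_nonneg hβ.le]
    _ ≤ D.θ * (2 * D.bound) := mul_le_mul hβθ hdiff (norm_nonneg _) D.θ_pos.le
    _ = 2 * D.θ * D.bound := by ring

theorem norm_apply_sub_d_le (h : Admissible D d P) {q r : ℕ} {γ : Γ} (hγ : γ ∈ D.Δ (q + 1))
    (hr : r ≤ q) (ih : ∀ γ' ∈ D.upTo q, ∀ s, ‖P s (eVec γ')‖ ≤ D.bound) :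
    ‖P r (eVec γ - d γ)‖ ≤ D.bound := by
  have hC := D.one_le_bound
  have h2θC : 2 * D.θ * D.bound ≤ D.bound := by linarith [D.one_add_two_mul_θ_mul_bound]
  rcases Nat.eq_zero_or_pos q with rfl | hq
  · rw [h.2.2.1 γ hγ, map_zero, norm_zero]
    linarith
  have hsmul : ∀ {α : ℝ} {v : ellOne Γ}, 0 ≤ α → α ≤ 1 → ‖v‖ ≤ D.bound → ‖α • v‖ ≤ D.bound :=
    fun {_ v} hα0 hα1 hv => by
      rw [norm_smul, Real.norm_of_nonneg hα0]
      nlinarith [norm_nonneg v]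
  have hb : ∀ {p : ℕ} {b : ellOne Γ}, ‖b‖ ≤ 1 →
      (∀ γ', γ' ∉ D.upTo q \ D.upTo p → b γ' = 0) →
      b ∈ Submodule.span ℝ (Set.range d) ∧ ∀ s, ‖P s b‖ ≤ D.bound := fun hb1 hsupp =>
    have hsupp' := fun γ' hγ' => hsupp γ' fun hm => hγ' hm.1
    ⟨h.mem_span_range_of_support hsupp', norm_apply_le_bound_of_support ih hb1 hsupp'⟩
  have hspec := D.τ_spec q hq γ hγ
  have hc := h.2.2.2 q hq γ hγ
  rcases hτ : D.τ γ with ⟨α, ξ⟩ | ⟨p, β, b⟩ | ⟨α, ξ, p, β, b⟩ <;> rw [hτ] at hspec hc <;>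
    dsimp only at hc <;> rw [hc]
  · obtain ⟨hα0, hα1, hξ⟩ := hspec
    rw [map_smul]
    exact hsmul hα0 hα1 (ih ξ hξ r)
  · obtain ⟨-, hβ, hβθ, hb1, hsupp⟩ := hspec
    obtain ⟨hbd, hbP⟩ := hb hb1 hsupp
    rw [map_smul]
    exact (h.norm_smul_apply_sub_apply_le hbd hbP hβ hβθ r p).trans h2θC
  · obtain ⟨hα0, hα1, -, hpq, hξ, hβ, hβθ, hb1, hsupp⟩ := hspec
    obtain ⟨hbd, hbP⟩ := hb hb1 hsupp
    rw [map_add, map_smul, map_smul]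
    rcases le_or_gt r p with hrp | hpr
    · rw [h.apply_sub_apply_of_le hrp hbd, smul_zero, add_zero]
      exact hsmul hα0.le hα1 (ih ξ (upTo_mono hpq.le hξ) r)
    · -- `ξ ∈ Γ_p` and `r > p`, so `P_r` fixes `e_ξ`
      rw [h.apply_of_mem_spanUpTo hpr.le (h.eVec_mem_spanUpTo hξ)]
      calc ‖α • eVec ξ + β • P r (b - P p b)‖
          ≤ ‖α • eVec ξ‖ + ‖β • P r (b - P p b)‖ := norm_add_le _ _
        _ ≤ 1 + 2 * D.θ * D.bound := add_le_add
            (by rw [norm_smul, ellOne.norm_eVec, Real.norm_of_nonneg hα0.le, mul_one]; exact hα1)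
            (h.norm_smul_apply_sub_apply_le hbd hbP hβ hβθ r p)
        _ = D.bound := D.one_add_two_mul_θ_mul_bound

theorem norm_apply_eVec_le (h : Admissible D d P) (r : ℕ) (γ : Γ) :
    ‖P r (eVec γ)‖ ≤ D.bound := by
  obtain ⟨q, hγ⟩ := D.exists_mem_upTo γ
  refine D.upTo_induction (R := fun _ γ => ∀ r, ‖P r (eVec γ)‖ ≤ D.bound) (fun _ _ => id)
    (fun q ih γ hγ r => ?_) q γ hγ r
  rcases le_or_gt (q + 1) r with hr | hr
  · rw [h.apply_of_mem_spanUpTo hr (h.eVec_mem_spanUpTo (mem_upTo_of_mem_Δ q.succ_pos hγ)),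
      ellOne.norm_eVec]
    exact D.one_le_bound
  · have hPd : P r (d γ) = 0 := h.apply_d_of_notMem (notMem_upTo_of_mem_Δ hγ hr)
    rw [← sub_zero (P r (eVec γ)), ← hPd, ← map_sub]
    exact h.norm_apply_sub_d_le hγ (Nat.lt_succ_iff.1 hr) ih

theorem norm_apply_le (h : Admissible D d P) (r : ℕ) (x : ellOne Γ) :
    ‖P r x‖ ≤ D.bound * ‖x‖ :=
  ellOne.norm_apply_le_of_norm_apply_eVec_le (P r) (s := Set.univ) (by simp)
    fun γ _ => h.norm_apply_eVec_le r γ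

theorem topologicalClosure_span_range_eq_top (h : Admissible D d P) :
    (Submodule.span ℝ (Set.range d)).topologicalClosure = ⊤ :=
  ellOne.topologicalClosure_eq_top_of_forall_eVec_mem fun γ =>
    let ⟨q, hγ⟩ := D.exists_mem_upTo γ
    spanUpTo_le_span_range D d q (h.eVec_mem_spanUpTo hγ)

theorem tendsto_apply (h : Admissible D d P) (x : ellOne Γ) :
    Tendsto (fun q => P q x) atTop (𝓝 x) := by
  have hequi : Equicontinuous fun q => ⇑(P q) :=
    ((NormedSpace.equicontinuous_TFAE P).out 3 1).1
      (show ∃ C, ∀ q x, ‖P q x‖ ≤ C * ‖x‖ from ⟨D.bound, h.norm_apply_le⟩)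
  have hclosed : IsClosed {x | Tendsto (fun q => P q x) atTop (𝓝 x)} :=
    hequi.isClosed_setOfPred_tendsto continuous_id
  have hspan : (Submodule.span ℝ (Set.range d) : Set (ellOne Γ)) ⊆
      {x | Tendsto (fun q => P q x) atTop (𝓝 x)} :=
    fun x hx => tendsto_nhds_of_eventually_eq (h.eventually_apply_eq hx)
  have hcl := closure_minimal hspan hclosed
  rw [← Submodule.topologicalClosure_coe, h.topologicalClosure_span_range_eq_top] at hcl
  exact hcl (Set.mem_univ x)

end Admissible

theorem stmt11 {Γ : Type*} (D : BDData Γ) (d : Γ → ellOne Γ)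
    (P : ℕ → ellOne Γ →L[ℝ] ellOne Γ) (h : Admissible D d P) :
    (∀ x : ellOne Γ, Filter.Tendsto (fun q => P q x) Filter.atTop (nhds x)) ∧
    (Submodule.span ℝ (Set.range d)).topologicalClosure = ⊤ :=
  ⟨h.tendsto_apply, h.topologicalClosure_span_range_eq_top⟩
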